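/- arXiv:1612.04237 — 3 statements merged into one kernel-verified Lean document; each statement's English description precedes it below -/
import Mathlib

section
/- Let R be a commutative local ring with maximal ideal m whose residue field k = R/m has characteristic different from 2, let ε ∈ {1, −1}, and let t ∈ m be an element with t·m = 0. Let J and J′ be r × r matrices over R that are both ε-symmetric (ᵀJ = ε·J and ᵀJ′ = ε·J′), with J invertible, and suppose every entry of J′ − J lies in the ideal t·R. Then there exists an r × r matrix A over R such that ᵀ(1 + t·A)·J·(1 + t·A) = J′. -/
/-- Over a commutative local ring `R` whose residue field has characteristic different from 2,
given `ε ∈ {1, -1}`, an element `t` of the maximal ideal with `t · m = 0`, and `ε`-symmetric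
`r × r` matrices `J`, `J′` over `R` with `J` invertible and all entries of `J′ − J` in `t·R`,
there exists `A` with `ᵀ(1 + t·A) · J · (1 + t·A) = J′`. -/
theorem stmt_1 {R : Type*} [CommRing R] [IsLocalRing R]
    (hchar : (2 : IsLocalRing.ResidueField R) ≠ 0)
    (ε : R) (hε : ε = 1 ∨ ε = -1)
    (t : R) (ht : t ∈ IsLocalRing.maximalIdeal R)
    (htm : ∀ x ∈ IsLocalRing.maximalIdeal R, t * x = 0)
    (r : ℕ) (J J' : Matrix (Fin r) (Fin r) R)
    (hJsym : J.transpose = ε • J) (hJ'sym : J'.transpose = ε • J')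
    (hJ : IsUnit J)
    (hdiff : ∀ i j, J' i j - J i j ∈ Ideal.span ({t} : Set R)) :
    ∃ A : Matrix (Fin r) (Fin r) R,
      (1 + t • A).transpose * J * (1 + t • A) = J' := by
  -- 2 is a unit in R
  have h2 : IsUnit (2 : R) := by
    refine (IsLocalRing.residue_ne_zero_iff_isUnit (2 : R)).mp ?_
    have h : IsLocalRing.residue R (2 : R) = (2 : IsLocalRing.ResidueField R) :=
      map_ofNat _ 2
    rw [h]; exact hchar
  have hεε : ε * ε = 1 := by rcases hε with h | h <;> simp [h]
  have htt : t * t = 0 := htm t ht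
  -- choose B with B i j * t = J' i j - J i j
  choose B0 hB0 using fun i j => Ideal.mem_span_singleton'.mp (hdiff i j)
  set B : Matrix (Fin r) (Fin r) R := Matrix.of B0 with hBdef
  have hB : ∀ i j, B i j * t = J' i j - J i j := hB0
  obtain ⟨u, hu⟩ := hJ
  obtain ⟨v, hv⟩ := h2
  set c : R := (↑v⁻¹ : R) with hc
  have hc2 : c * 2 = 1 := by rw [hc, ← hv]; exact v.inv_mul
  set K : Matrix (Fin r) (Fin r) R := (↑u⁻¹ : Matrix (Fin r) (Fin r) R) with hK
  have hJK : J * K = 1 := by rw [← hu, hK]; exact u.mul_inv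
  -- Kᵀ * J = ε • 1
  have hKtJ : K.transpose * J = ε • (1 : Matrix (Fin r) (Fin r) R) := by
    have h1 : K.transpose * J.transpose = 1 := by
      rw [← Matrix.transpose_mul, hJK, Matrix.transpose_one]
    rw [hJsym, Matrix.mul_smul] at h1
    calc K.transpose * J = (ε * ε) • (K.transpose * J) := by rw [hεε, one_smul]
      _ = ε • (ε • (K.transpose * J)) := by rw [mul_smul]
      _ = ε • (1 : Matrix (Fin r) (Fin r) R) := by rw [h1]
  -- symmetry of t • B
  have hsymB : ∀ i j, t * B j i = ε * (t * B i j) := by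
    intro i j
    have h1 : t * B j i = J' j i - J j i := by rw [mul_comm]; exact hB j i
    have h2' : J' j i = ε * J' i j := by
      have h := congrFun (congrFun hJ'sym i) j
      simpa [Matrix.transpose_apply, Matrix.smul_apply, smul_eq_mul] using h
    have h3 : J j i = ε * J i j := by
      have h := congrFun (congrFun hJsym i) j
      simpa [Matrix.transpose_apply, Matrix.smul_apply, smul_eq_mul] using h
    rw [h1, h2', h3, ← mul_sub, ← hB i j, mul_comm (B i j) t]
  refine ⟨c • (K * B), ?_⟩
  set A : Matrix (Fin r) (Fin r) R := c • (K * B) with hA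
  have hJA : J * A = c • B := by
    rw [hA, Matrix.mul_smul, ← Matrix.mul_assoc, hJK, Matrix.one_mul]
  have hAtJ : A.transpose * J = (c * ε) • B.transpose := by
    rw [hA, Matrix.transpose_smul, Matrix.transpose_mul, Matrix.smul_mul, Matrix.mul_assoc,
      hKtJ, Matrix.mul_smul, Matrix.mul_one, smul_smul]
  have expand : (1 + t • A).transpose * J * (1 + t • A)
      = J + t • (A.transpose * J) + t • (J * A) + (t * t) • (A.transpose * J * A) := by
    simp only [Matrix.transpose_add, Matrix.transpose_one, Matrix.transpose_smul,
      Matrix.add_mul, Matrix.mul_add, Matrix.one_mul, Matrix.mul_one,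
      Matrix.smul_mul, Matrix.mul_smul, smul_add, smul_smul]
    abel
  rw [expand, htt, zero_smul, add_zero, hAtJ, hJA]
  ext i j
  simp only [Matrix.add_apply, Matrix.smul_apply, Matrix.transpose_apply, smul_eq_mul]
  linear_combination (c * ε) * (hsymB i j) + (c * t * B i j) * hεε + (t * B i j) * hc2 + hB i j
end

section
/- Let R be a commutative Artinian local ring with maximal ideal m whose residue field k = R/m has characteristic different from 2, and let ε ∈ {1, −1}. Let J and J′ be invertible ε-symmetric r × r matrices over R (ᵀJ = ε·J, ᵀJ′ = ε·J′) such that J ≡ J′ modulo m (entrywise). Then there exists an invertible r × r matrix U over R with U ≡ 1 modulo m (entrywise) and ᵀU·J·U = J′. -/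
section aux

variable {R : Type*} [CommRing R] {r : ℕ}

private lemma entry_mul_mem_left (I : Ideal R) {A B : Matrix (Fin r) (Fin r) R}
    (hA : ∀ i j, A i j ∈ I) (i j : Fin r) : (A * B) i j ∈ I := by
  rw [Matrix.mul_apply]
  exact Ideal.sum_mem _ fun k _ => Ideal.mul_mem_right _ _ (hA i k)

private lemma entry_mul_mem_right (I : Ideal R) {A B : Matrix (Fin r) (Fin r) R}
    (hB : ∀ i j, B i j ∈ I) (i j : Fin r) : (A * B) i j ∈ I := by
  rw [Matrix.mul_apply]
  exact Ideal.sum_mem _ fun k _ => Ideal.mul_mem_left _ _ (hB k j)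

private lemma entry_mul_mem_mul (I I' : Ideal R) {A B : Matrix (Fin r) (Fin r) R}
    (hA : ∀ i j, A i j ∈ I) (hB : ∀ i j, B i j ∈ I') (i j : Fin r) : (A * B) i j ∈ I * I' := by
  rw [Matrix.mul_apply]
  exact Ideal.sum_mem _ fun k _ => Ideal.mul_mem_mul (hA i k) (hB k j)

private lemma isUnit_of_cong_one [IsLocalRing R] {A : Matrix (Fin r) (Fin r) R}
    (h : ∀ i j, (A - 1) i j ∈ IsLocalRing.maximalIdeal R) : IsUnit A := by
  rw [Matrix.isUnit_iff_isUnit_det]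
  by_contra hd
  have hmem : A.det ∈ IsLocalRing.maximalIdeal R := (IsLocalRing.mem_maximalIdeal _).mpr hd
  have hmap : A.map (IsLocalRing.residue R) = 1 := by
    ext i j
    have := h i j
    rw [Matrix.sub_apply] at this
    have hz : IsLocalRing.residue R (A i j - (1 : Matrix (Fin r) (Fin r) R) i j) = 0 :=
      Ideal.Quotient.eq_zero_iff_mem.mpr this
    rw [map_sub, sub_eq_zero] at hz
    simpa [Matrix.map_apply, Matrix.one_apply] using
      hz.trans (by by_cases hij : i = j <;> simp [Matrix.one_apply, hij])
  have hdet1 : (A.map (IsLocalRing.residue R)).det = 1 := by rw [hmap, Matrix.det_one]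
  rw [← RingHom.mapMatrix_apply, ← RingHom.map_det] at hdet1
  have h0 : IsLocalRing.residue R A.det = 0 := Ideal.Quotient.eq_zero_iff_mem.mpr hmem
  rw [h0] at hdet1
  exact zero_ne_one hdet1

end aux

/-- Over a commutative Artinian local ring `R` whose residue field has characteristic different
from 2, two invertible `ε`-symmetric `r × r` matrices `J`, `J′` that agree modulo the maximal
ideal are congruent via a matrix `U` that is invertible and reduces to the identity. -/
theorem stmt_2 {R : Type*} [CommRing R] [IsArtinianRing R] [IsLocalRing R]
    (hchar : (2 : IsLocalRing.ResidueField R) ≠ 0)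
    (ε : R) (hε : ε = 1 ∨ ε = -1)
    (r : ℕ) (J J' : Matrix (Fin r) (Fin r) R)
    (hJsym : J.transpose = ε • J) (hJ'sym : J'.transpose = ε • J')
    (hJ : IsUnit J) (hJ' : IsUnit J')
    (hcong : ∀ i j, J i j - J' i j ∈ IsLocalRing.maximalIdeal R) :
    ∃ U : Matrix (Fin r) (Fin r) R, IsUnit U ∧
      (∀ i j, U i j - (1 : Matrix (Fin r) (Fin r) R) i j ∈ IsLocalRing.maximalIdeal R) ∧
      U.transpose * J * U = J' := by
  classical
  set m := IsLocalRing.maximalIdeal R with hm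
  -- the maximal ideal is nilpotent
  obtain ⟨n, hn⟩ : IsNilpotent m := by
    have h := IsArtinianRing.isNilpotent_jacobson_bot (R := R)
    rwa [IsLocalRing.jacobson_eq_maximalIdeal ⊥ bot_ne_top] at h
  -- 2 is a unit
  have h2 : IsUnit (2 : R) := by
    by_contra h
    have hmem : (2 : R) ∈ m := (IsLocalRing.mem_maximalIdeal _).mpr h
    have : IsLocalRing.residue R 2 = 0 := Ideal.Quotient.eq_zero_iff_mem.mpr hmem
    rw [map_ofNat] at this
    exact hchar this
  have hεε : ε * ε = 1 := by rcases hε with h | h <;> subst h <;> ring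
  set c : R := ↑h2.unit⁻¹ with hcdef
  have hc : 2 * c = 1 := by
    rw [hcdef]
    exact h2.mul_val_inv
  -- main induction: congruence modulo m^(k+1)
  have key : ∀ k : ℕ, ∃ U : Matrix (Fin r) (Fin r) R, IsUnit U ∧
      (∀ i j, (U - 1) i j ∈ m) ∧
      (∀ i j, (U.transpose * J * U - J') i j ∈ m ^ (k + 1)) := by
    intro k
    induction k with
    | zero =>
      refine ⟨1, isUnit_one, by simp, fun i j => ?_⟩
      simpa [pow_one] using hcong i j
    | succ k ih =>
      obtain ⟨U, hU, hU1, hUk⟩ := ih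
      set J₁' : Matrix (Fin r) (Fin r) R := U.transpose * J * U with hJ₁'def
      have hdet : IsUnit J₁'.det := by
        rw [hJ₁'def, Matrix.det_mul, Matrix.det_mul, Matrix.det_transpose]
        exact ((Matrix.isUnit_iff_isUnit_det U).mp hU).mul
          ((Matrix.isUnit_iff_isUnit_det J).mp hJ) |>.mul
          ((Matrix.isUnit_iff_isUnit_det U).mp hU)
      -- symmetry of J₁'
      have hs : J₁'.transpose = ε • J₁' := by
        rw [hJ₁'def]
        simp only [Matrix.transpose_mul, Matrix.transpose_transpose, hJsym,
          Matrix.smul_mul, Matrix.mul_smul, Matrix.mul_assoc]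
      set D : Matrix (Fin r) (Fin r) R := J' - J₁' with hDdef
      have hD : ∀ i j, D i j ∈ m ^ (k + 1) := by
        intro i j
        have h := (m ^ (k + 1)).neg_mem (hUk i j)
        rw [Matrix.sub_apply, neg_sub] at h
        simpa [hDdef, Matrix.sub_apply] using h
      have hDs : D.transpose = ε • D := by
        rw [hDdef, Matrix.transpose_sub, hJ'sym, hs, ← smul_sub]
      have hinvT : J₁'⁻¹.transpose = ε • J₁'⁻¹ := by
        rw [Matrix.transpose_nonsing_inv, hs]
        apply Matrix.inv_eq_right_inv
        rw [Matrix.smul_mul, Matrix.mul_smul, smul_smul, hεε, one_smul,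
          Matrix.mul_nonsing_inv _ hdet]
      set H : Matrix (Fin r) (Fin r) R := c • (J₁'⁻¹ * D) with hHdef
      have hH : ∀ i j, H i j ∈ m ^ (k + 1) := by
        intro i j
        rw [hHdef, Matrix.smul_apply, smul_eq_mul]
        exact Ideal.mul_mem_left _ _ (entry_mul_mem_right _ hD i j)
      have hHT : H.transpose = c • (D * J₁'⁻¹) := by
        rw [hHdef, Matrix.transpose_smul, Matrix.transpose_mul, hDs, hinvT,
          Matrix.smul_mul, Matrix.mul_smul, smul_smul, smul_smul, mul_assoc, hεε, mul_one]
      have hkey : H.transpose * J₁' + J₁' * H = D := by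
        rw [hHT, hHdef, Matrix.smul_mul, Matrix.mul_smul, Matrix.mul_assoc,
          Matrix.nonsing_inv_mul _ hdet, Matrix.mul_one, ← Matrix.mul_assoc,
          Matrix.mul_nonsing_inv _ hdet, Matrix.one_mul, ← add_smul, ← two_mul, hc, one_smul]
      -- the new U
      set V : Matrix (Fin r) (Fin r) R := 1 + H with hVdef
      have hHm : ∀ i j, H i j ∈ m := by
        intro i j
        have h := Ideal.pow_le_pow_right (Nat.le_add_left 1 k) (hH i j)
        rwa [pow_one] at h
      have hV1 : ∀ i j, (V - 1) i j ∈ m := by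
        intro i j
        simpa [hVdef] using hHm i j
      have hVunit : IsUnit V := isUnit_of_cong_one hV1
      refine ⟨U * V, hU.mul hVunit, ?_, ?_⟩
      · intro i j
        have : U * V - 1 = (U - 1) + U * H := by
          rw [hVdef]; noncomm_ring
        rw [this, Matrix.add_apply]
        exact Ideal.add_mem _ (hU1 i j) (entry_mul_mem_right _ hHm i j)
      · intro i j
        have hexp : (U * V).transpose * J * (U * V) - J' = H.transpose * (J₁' * H) := by
          have h1 : (U * V).transpose * J * (U * V) = V.transpose * J₁' * V := by
            rw [Matrix.transpose_mul, hJ₁'def]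
            noncomm_ring
          rw [h1, hVdef, Matrix.transpose_add, Matrix.transpose_one]
          have h2 : (1 + H.transpose) * J₁' * (1 + H) =
              J₁' + (H.transpose * J₁' + J₁' * H) + H.transpose * (J₁' * H) := by noncomm_ring
          rw [h2, hkey, hDdef]
          noncomm_ring
        rw [hexp]
        have hmem : (H.transpose * (J₁' * H)) i j ∈ m ^ (k + 1) * m ^ (k + 1) := by
          refine entry_mul_mem_mul _ _ (fun i j => ?_) (fun i j => ?_) i j
          · simpa [Matrix.transpose_apply] using hH j i
          · exact entry_mul_mem_right _ hH i j
        rw [← pow_add] at hmem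
        exact Ideal.pow_le_pow_right (by omega) hmem
  obtain ⟨U, hU, hU1, hUn⟩ := key n
  refine ⟨U, hU, fun i j => by simpa using hU1 i j, ?_⟩
  have : U.transpose * J * U - J' = 0 := by
    ext i j
    have h := Ideal.pow_le_pow_right (Nat.le_succ n) (hUn i j)
    rw [hn] at h
    simpa using h
  rw [sub_eq_zero] at this
  exact this
end

section
/- Let q be a prime power, let h and h′ be positive integers, let L = lcm(h, h′), and let a be a positive divisor of L with d = L/a. Let F be a finite field with q^L elements, and let K₁ and K₂ be the (unique) subfields of F with q^h and q^{h′} elements, respectively. Then there exist nonzero elements ζ ∈ K₁ and ζ′ ∈ K₂ such that Σ_{m=0}^{d−1} (ζ·ζ′)^{q^{m·a}} ≠ 0 in F. -/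
/-- Let `q` be a prime power, `L = lcm(h, h′)`, `a` a positive divisor of `L` with `d = L/a`,
`F` a finite field with `q^L` elements, and `K₁`, `K₂` subfields of `F` with `q^h` and `q^{h′}`
elements. Then there are nonzero `ζ ∈ K₁` and `ζ′ ∈ K₂` with
`∑_{m=0}^{d−1} (ζζ′)^{q^{m a}} ≠ 0`. -/
theorem stmt_7 (p nq : ℕ) (hp : p.Prime) (hnq : 0 < nq) (q : ℕ) (hq : q = p ^ nq)
    (h h' : ℕ) (hh : 0 < h) (hh' : 0 < h') (L : ℕ) (hL : L = Nat.lcm h h')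
    (a : ℕ) (ha : 0 < a) (hdvd : a ∣ L) (d : ℕ) (hd : d = L / a)
    (F : Type*) [Field F] [Fintype F] (hF : Fintype.card F = q ^ L)
    (K₁ K₂ : Subfield F) (hK₁ : Nat.card K₁ = q ^ h) (hK₂ : Nat.card K₂ = q ^ h') :
    ∃ ζ ∈ K₁, ∃ ζ' ∈ K₂, ζ ≠ 0 ∧ ζ' ≠ 0 ∧
      ∑ m ∈ Finset.range d, (ζ * ζ') ^ q ^ (m * a) ≠ 0 := by
  classical
  by_contra hcon
  push_neg at hcon
  -- basic numerics
  have hq2 : 2 ≤ q := by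
    rw [hq]
    exact Nat.one_lt_pow hnq.ne' hp.one_lt
  have hL0 : 0 < L := by
    rw [hL]
    exact Nat.lcm_pos hh hh'
  have hda : d * a = L := by
    rw [hd]
    exact Nat.div_mul_cancel hdvd
  have hd0 : 0 < d := by
    rcases Nat.eq_zero_or_pos d with h0 | h0
    · rw [h0] at hda; omega
    · exact h0
  -- the characteristic of `F` is `p`
  have hcardF : Fintype.card F = p ^ (nq * L) := by
    rw [hF, hq, ← pow_mul]
  obtain ⟨n, hrp, hrc⟩ := FiniteField.card F (ringChar F)
  have hpring : p = ringChar F := by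
    have h1 : p ^ (nq * L) = ringChar F ^ (n : ℕ) := by rw [← hcardF, hrc]
    have h2 : p ∣ ringChar F ^ (n : ℕ) := h1 ▸ dvd_pow_self p (by positivity)
    have h3 : p ∣ ringChar F := hp.dvd_of_dvd_pow h2
    exact ((Nat.prime_dvd_prime_iff_eq hp hrp).1 h3)
  haveI : CharP F p := hpring ▸ ringChar.charP F
  haveI : ExpChar F p := ExpChar.prime hp
  -- the additive map `P`
  set P : F →+ F :=
    ∑ m ∈ Finset.range d, (iterateFrobenius F p (nq * (m * a))).toAddMonoidHom with hP
  have hPeval : ∀ x : F, P x = ∑ m ∈ Finset.range d, x ^ q ^ (m * a) := by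
    intro x
    rw [hP, AddMonoidHom.finset_sum_apply]
    refine Finset.sum_congr rfl fun m _ => ?_
    simp only [RingHom.toAddMonoidHom_eq_coe, AddMonoidHom.coe_coe, iterateFrobenius_def]
    rw [hq, ← pow_mul]
  -- `P` does not vanish identically
  obtain ⟨x₀, hx₀⟩ : ∃ x : F, P x ≠ 0 := by
    by_contra hall
    push_neg at hall
    set f : Polynomial F := ∑ m ∈ Finset.range d, Polynomial.X ^ q ^ (m * a) with hf
    have hfne : f ≠ 0 := by
      have hc : f.coeff 1 = 1 := by
        rw [hf, Polynomial.finset_sum_coeff]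
        rw [Finset.sum_eq_single 0]
        · simp
        · intro m hm hm0
          rw [Polynomial.coeff_X_pow]
          have hge : 2 ≤ q ^ (m * a) := by
            calc 2 ≤ q := hq2
            _ = q ^ 1 := (pow_one q).symm
            _ ≤ q ^ (m * a) := Nat.pow_le_pow_right (by omega) (by
                have : 1 ≤ m := Nat.one_le_iff_ne_zero.2 hm0
                exact Nat.one_le_iff_ne_zero.2 (by positivity))
          rw [if_neg (by omega)]
        · intro h0
          exact absurd (Finset.mem_range.2 hd0) h0
      intro h0
      rw [h0, Polynomial.coeff_zero] at hc
      exact one_ne_zero hc.symm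
    have hdeg : f.natDegree < q ^ L := by
      have hle : f.natDegree ≤ q ^ ((d - 1) * a) := by
        apply Polynomial.natDegree_sum_le_of_forall_le
        intro m hm
        rw [Polynomial.natDegree_X_pow]
        have hm' : m ≤ d - 1 := by have := Finset.mem_range.1 hm; omega
        exact Nat.pow_le_pow_right (by omega) (Nat.mul_le_mul_right a hm')
      have hlt : (d - 1) * a < L := by
        have : (d - 1) * a = L - a := by
          rw [Nat.sub_mul, one_mul, hda]
        omega
      calc f.natDegree ≤ q ^ ((d - 1) * a) := hle
        _ < q ^ L := Nat.pow_lt_pow_right (by omega) hlt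
    have hroots : ∀ x : F, x ∈ f.roots := by
      intro x
      rw [Polynomial.mem_roots hfne]
      have : f.eval x = P x := by
        rw [hf, Polynomial.eval_finset_sum, hPeval]
        simp
      rw [Polynomial.IsRoot, this, hall x]
    have hcard : Fintype.card F ≤ f.natDegree := by
      calc Fintype.card F = Finset.univ.card := (Finset.card_univ (α := F)).symm
        _ ≤ f.roots.toFinset.card :=
            Finset.card_le_card (fun x _ => Multiset.mem_toFinset.2 (hroots x))
        _ ≤ Multiset.card f.roots := f.roots.toFinset_card_le
        _ ≤ f.natDegree := f.card_roots'
    rw [hF] at hcard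
    omega
  -- the generating set of products
  set T : Set F := {z | ∃ x ∈ K₁, ∃ y ∈ K₂, x * y = z} with hT
  have hTker : ∀ z ∈ T, P z = 0 := by
    rintro z ⟨x, hx, y, hy, rfl⟩
    by_cases hx0 : x = 0
    · rw [hx0, zero_mul, map_zero]
    by_cases hy0 : y = 0
    · rw [hy0, mul_zero, map_zero]
    rw [hPeval]
    exact hcon x hx y hy hx0 hy0
  set S : AddSubgroup F := AddSubgroup.closure T with hS
  have hSker : ∀ z ∈ S, P z = 0 := by
    intro z hz
    have : S ≤ P.ker := by
      rw [hS]
      exact AddSubgroup.closure_le _ |>.2 fun t ht => AddMonoidHom.mem_ker.2 (hTker t ht)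
    exact AddMonoidHom.mem_ker.1 (this hz)
  -- `S` is closed under multiplication by elements of `K₁` and `K₂`
  have hmul1 : ∀ c ∈ K₁, ∀ z ∈ S, c * z ∈ S := by
    intro c hc z hz
    refine AddSubgroup.closure_induction (k := T)
      (p := fun z _ => c * z ∈ S) ?_ ?_ ?_ ?_ hz
    · rintro w ⟨x, hx, y, hy, rfl⟩
      exact AddSubgroup.subset_closure ⟨c * x, K₁.mul_mem hc hx, y, hy, by ring⟩
    · show c * 0 ∈ S
      rw [mul_zero]; exact S.zero_mem
    · intro x y _ _ hx hy
      show c * (x + y) ∈ S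
      rw [mul_add]; exact S.add_mem hx hy
    · intro x _ hx
      show c * (-x) ∈ S
      rw [mul_neg]; exact S.neg_mem hx
  have hmul2 : ∀ c ∈ K₂, ∀ z ∈ S, c * z ∈ S := by
    intro c hc z hz
    refine AddSubgroup.closure_induction (k := T)
      (p := fun z _ => c * z ∈ S) ?_ ?_ ?_ ?_ hz
    · rintro w ⟨x, hx, y, hy, rfl⟩
      exact AddSubgroup.subset_closure ⟨x, hx, c * y, K₂.mul_mem hc hy, by ring⟩
    · show c * 0 ∈ S
      rw [mul_zero]; exact S.zero_mem
    · intro x y _ _ hx hy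
      show c * (x + y) ∈ S
      rw [mul_add]; exact S.add_mem hx hy
    · intro x _ hx
      show c * (-x) ∈ S
      rw [mul_neg]; exact S.neg_mem hx
  -- view `S` as a `K₁`-submodule and a `K₂`-submodule
  let M₁ : Submodule K₁ F :=
    { carrier := S
      add_mem' := fun hx hy => S.add_mem hx hy
      zero_mem' := S.zero_mem
      smul_mem' := fun c z hz => hmul1 (c : F) c.2 z hz }
  let M₂ : Submodule K₂ F :=
    { carrier := S
      add_mem' := fun hx hy => S.add_mem hx hy
      zero_mem' := S.zero_mem
      smul_mem' := fun c z hz => hmul2 (c : F) c.2 z hz }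
  have hcard1 : Nat.card M₁ = Nat.card K₁ ^ Module.finrank K₁ M₁ := by
    rw [Nat.card_eq_fintype_card, Nat.card_eq_fintype_card]
    exact Module.card_eq_pow_finrank
  have hcard2 : Nat.card M₂ = Nat.card K₂ ^ Module.finrank K₂ M₂ := by
    rw [Nat.card_eq_fintype_card, Nat.card_eq_fintype_card]
    exact Module.card_eq_pow_finrank
  have hSM1 : Nat.card S = Nat.card M₁ := rfl
  have hSM2 : Nat.card S = Nat.card M₂ := rfl
  set r₁ := Module.finrank K₁ M₁ with hr₁
  set r₂ := Module.finrank K₂ M₂ with hr₂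
  have hcq1 : Nat.card S = q ^ (h * r₁) := by
    rw [hSM1, hcard1, hK₁, ← pow_mul]
  have hcq2 : Nat.card S = q ^ (h' * r₂) := by
    rw [hSM2, hcard2, hK₂, ← pow_mul]
  have hk : h * r₁ = h' * r₂ :=
    Nat.pow_right_injective hq2 (hcq1.symm.trans hcq2)
  have hLk : L ∣ h * r₁ := by
    rw [hL]
    exact Nat.lcm_dvd (Dvd.intro r₁ rfl) (hk ▸ Dvd.intro r₂ rfl)
  have hkL : h * r₁ ≤ L := by
    have hle : Nat.card S ≤ Nat.card F :=
      Nat.card_le_card_of_injective _ Subtype.val_injective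
    rw [hcq1, Nat.card_eq_fintype_card, hF] at hle
    exact (Nat.pow_le_pow_iff_right hq2).1 hle
  have hk0 : h * r₁ ≠ 0 := by
    intro h0
    have h1S : (1 : F) ∈ S :=
      AddSubgroup.subset_closure ⟨1, K₁.one_mem, 1, K₂.one_mem, by ring⟩
    have hnt : Nontrivial S := ⟨⟨0, S.zero_mem⟩, ⟨1, h1S⟩, by simp⟩
    have h2 : 1 < Nat.card S := @Finite.one_lt_card_iff_nontrivial S _ |>.2 hnt
    rw [hcq1, h0, pow_zero] at h2
    omega
  have hkLeq : h * r₁ = L := Nat.le_antisymm hkL (Nat.le_of_dvd (by omega) hLk)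
  have hStop : S = ⊤ := by
    apply AddSubgroup.eq_top_of_card_eq
    rw [hcq1, hkLeq, Nat.card_eq_fintype_card, hF]
  exact hx₀ (hSker x₀ (hStop ▸ AddSubgroup.mem_top x₀))
end
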